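/- arXiv:math/9907165 — 4 statements merged into one kernel-verified Lean document; each statement's English description precedes it below -/
import Mathlib

section
/- Under the stated setup, for every ρ with 1 < ρ < r there exists a constant C ≥ 0 such that |K(i,j)| ≤ C ρ^{-(i+j+1)} for all integers i, j ≥ 0; in particular Σ_{i≥0} Σ_{j≥0} |K(i,j)| < ∞. -/
/-!
On both circles `|ζ| = ρ` and `|η| = ρ⁻¹` the point lies inside the annulus of convergence, so the
two Laurent series defining `V*` are dominated termwise by `|v±_k| r^k`, so there
`|V*| ≤ M := Σ |v⁻_k| r^k + Σ |v⁺_k| r^k`. Hence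
the integrand is bounded by `e^{2M} (ρ - ρ⁻¹)⁻¹ ρ^{-(i+j+1)}`, and the standard length estimate for
the two circles (lengths `2πρ` and `2πρ⁻¹`) cancels the factor `(2πi)⁻²`. Summability follows by
comparison with a product of two geometric series of ratio `ρ⁻¹`.
-/

open Complex

lemma norm_tsum_neg_one_pow_mul_pow_succ_le {c : ℕ → ℂ} {R : ℝ}
    (hc : Summable fun k : ℕ => ‖c k‖ * R ^ (k + 1)) {w : ℂ} (hw : ‖w‖ ≤ R) :
    ‖∑' k : ℕ, (-1 : ℂ) ^ (k + 1) * c k * w ^ (k + 1)‖ ≤ ∑' k : ℕ, ‖c k‖ * R ^ (k + 1) := by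
  refine tsum_of_norm_bounded hc.hasSum fun k => ?_
  simp only [norm_mul, norm_pow, norm_neg, norm_one, one_pow, one_mul]
  gcongr

lemma norm_laurent_tsum_le {r : ℝ} {vp vm : ℕ → ℂ}
    (hvp : Summable fun k : ℕ => ‖vp (k + 1)‖ * r ^ (k + 1))
    (hvm : Summable fun k : ℕ => ‖vm (k + 1)‖ * r ^ (k + 1))
    {z : ℂ} (h₁ : r⁻¹ < ‖z‖) (h₂ : ‖z‖ < r) :
    ‖(∑' k : ℕ, (-1 : ℂ) ^ (k + 1) * vm (k + 1) * z ^ (-((k : ℤ) + 1))) -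
        ∑' k : ℕ, (-1 : ℂ) ^ (k + 1) * vp (k + 1) * z ^ (k + 1)‖ ≤
      (∑' k : ℕ, ‖vm (k + 1)‖ * r ^ (k + 1)) + ∑' k : ℕ, ‖vp (k + 1)‖ * r ^ (k + 1) := by
  have hr : 0 < r := (norm_nonneg z).trans_lt h₂
  have hz_inv : ‖z⁻¹‖ ≤ r := by
    rw [norm_inv]
    exact inv_le_of_inv_le₀ hr h₁.le
  have h_zpow : ∀ k : ℕ, z ^ (-((k : ℤ) + 1)) = z⁻¹ ^ (k + 1) := fun k => by
    rw [zpow_neg, ← inv_zpow, show (k : ℤ) + 1 = ((k + 1 : ℕ) : ℤ) by push_cast; ring,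
      zpow_natCast]
  simp_rw [h_zpow]
  refine (norm_sub_le _ _).trans (add_le_add ?_ ?_)
  · exact norm_tsum_neg_one_pow_mul_pow_succ_le (c := fun k => vm (k + 1)) hvm hz_inv
  · exact norm_tsum_neg_one_pow_mul_pow_succ_le (c := fun k => vp (k + 1)) hvp h₂.le

lemma norm_two_pi_I_inv_sq_mul_circleIntegral_circleIntegral_le {f : ℂ → ℂ → ℂ}
    {c₁ c₂ : ℂ} {R₁ R₂ B : ℝ} (hR₁ : 0 ≤ R₁) (hR₂ : 0 ≤ R₂)
    (hf : ∀ ζ ∈ Metric.sphere c₁ R₁, ∀ η ∈ Metric.sphere c₂ R₂, ‖f ζ η‖ ≤ B) :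
    ‖((2 * Real.pi * I)⁻¹) ^ 2 * ∮ ζ in C(c₁, R₁), ∮ η in C(c₂, R₂), f ζ η‖ ≤ R₁ * R₂ * B := by
  have h_inner : ∀ ζ ∈ Metric.sphere c₁ R₁, ‖∮ η in C(c₂, R₂), f ζ η‖ ≤ 2 * Real.pi * R₂ * B :=
    fun ζ hζ => circleIntegral.norm_integral_le_of_norm_le_const hR₂ (hf ζ hζ)
  have h_outer := circleIntegral.norm_integral_le_of_norm_le_const hR₁ h_inner
  have h_const : ‖((2 * (Real.pi : ℂ) * I)⁻¹) ^ 2‖ = ((2 * Real.pi)⁻¹) ^ 2 := by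
    simp [abs_of_nonneg Real.pi_nonneg]
  rw [norm_mul, h_const]
  calc ((2 * Real.pi)⁻¹) ^ 2 * ‖∮ ζ in C(c₁, R₁), ∮ η in C(c₂, R₂), f ζ η‖
      ≤ ((2 * Real.pi)⁻¹) ^ 2 * (2 * Real.pi * R₁ * (2 * Real.pi * R₂ * B)) := by gcongr
    _ = R₁ * R₂ * B := by field_simp

lemma norm_inv_sub_le_inv_sub_norm {ζ η : ℂ} (h : ‖η‖ < ‖ζ‖) :
    ‖(ζ - η)⁻¹‖ ≤ (‖ζ‖ - ‖η‖)⁻¹ := by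
  rw [norm_inv]
  exact inv_anti₀ (sub_pos.2 h) (norm_sub_norm_le ζ η)

lemma norm_kernel_integrand_le {a b ζ η : ℂ} {M ρ : ℝ} (hρ : 1 < ρ)
    (ha : ‖a‖ ≤ M) (hb : ‖b‖ ≤ M) (hζ : ‖ζ‖ = ρ) (hη : ‖η‖ = ρ⁻¹) (i j : ℤ) :
    ‖exp (a - b) * (ζ - η)⁻¹ * ζ ^ (-i - 1) * η ^ j‖ ≤
      Real.exp (2 * M) * (ρ - ρ⁻¹)⁻¹ * ρ ^ (-(i + j + 1)) := by
  have hρ₀ : 0 < ρ := one_pos.trans hρ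
  have h_exp : ‖exp (a - b)‖ ≤ Real.exp (2 * M) :=
    (norm_exp_le_exp_norm _).trans <| Real.exp_le_exp.2 <| by
      linarith [norm_sub_le a b]
  have h_inv : ‖(ζ - η)⁻¹‖ ≤ (ρ - ρ⁻¹)⁻¹ := by
    have h_lt : ‖η‖ < ‖ζ‖ := by rw [hζ, hη]; exact (inv_lt_one_of_one_lt₀ hρ).trans hρ
    simpa only [hζ, hη] using norm_inv_sub_le_inv_sub_norm h_lt
  have h_pow : ‖ζ ^ (-i - 1) * η ^ j‖ = ρ ^ (-(i + j + 1)) := by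
    rw [norm_mul, norm_zpow, norm_zpow, hζ, hη, inv_zpow', ← zpow_add₀ hρ₀.ne']
    ring_nf
  rw [mul_assoc, norm_mul, h_pow, norm_mul]
  gcongr

lemma summable_zpow_neg_add_add_one {ρ : ℝ} (hρ : 1 < ρ) :
    Summable fun p : ℕ × ℕ => ρ ^ (-((p.1 : ℤ) + p.2 + 1)) := by
  have hρ₀ : 0 < ρ := one_pos.trans hρ
  have h_geom : Summable fun n : ℕ => ρ⁻¹ ^ n :=
    summable_geometric_of_lt_one (by positivity) (inv_lt_one_of_one_lt₀ hρ)
  refine ((h_geom.mul_of_nonneg h_geom (fun _ => by positivity) fun _ => by positivity).mul_left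
    ρ⁻¹).congr fun p => ?_
  rw [zpow_neg, show (p.1 : ℤ) + p.2 + 1 = ((p.1 + p.2 + 1 : ℕ) : ℤ) by push_cast; ring,
    zpow_natCast, ← inv_pow, pow_add, pow_add, pow_one]
  ring

theorem kernel_decay_bound_general
    (r : ℝ)
    (vp vm : ℕ → ℂ)
    (hvp : Summable fun k : ℕ => ‖vp (k + 1)‖ * r ^ (k + 1))
    (hvm : Summable fun k : ℕ => ‖vm (k + 1)‖ * r ^ (k + 1))
    (Vs : ℂ → ℂ)
    (hVs : ∀ ζ : ℂ, r⁻¹ < ‖ζ‖ → ‖ζ‖ < r →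
      Vs ζ = (∑' k : ℕ, (-1 : ℂ) ^ (k + 1) * vm (k + 1) * ζ ^ (-((k : ℤ) + 1))) -
             ∑' k : ℕ, (-1 : ℂ) ^ (k + 1) * vp (k + 1) * ζ ^ (k + 1))
    (ρ : ℝ) (hρ1 : 1 < ρ) (hρr : ρ < r)
    (K : ℤ → ℤ → ℂ)
    (hK : ∀ i j : ℤ, 0 ≤ i → 0 ≤ j →
      K i j = ((2 * Real.pi * Complex.I)⁻¹) ^ 2 *
        ∮ ζ in C(0, ρ), (∮ η in C(0, ρ⁻¹),
          Complex.exp (Vs ζ - Vs η) * (ζ - η)⁻¹ * ζ ^ (-i - 1) * η ^ j)) :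
    (∃ C : ℝ, 0 ≤ C ∧ ∀ i j : ℤ, 0 ≤ i → 0 ≤ j →
      ‖K i j‖ ≤ C * ρ ^ (-(i + j + 1))) ∧
    Summable fun p : ℕ × ℕ => ‖K p.1 p.2‖ := by
  have hρ₀ : 0 < ρ := one_pos.trans hρ1
  set M := (∑' k : ℕ, ‖vm (k + 1)‖ * r ^ (k + 1)) + ∑' k : ℕ, ‖vp (k + 1)‖ * r ^ (k + 1)
  have h_annulus : ∀ z : ℂ, r⁻¹ < ‖z‖ → ‖z‖ < r → ‖Vs z‖ ≤ M := fun z h₁ h₂ =>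
    hVs z h₁ h₂ ▸ norm_laurent_tsum_le hvp hvm h₁ h₂
  have hV_outer : ∀ ζ ∈ Metric.sphere (0 : ℂ) ρ, ‖Vs ζ‖ ≤ M := fun ζ hζ => by
    rw [mem_sphere_zero_iff_norm] at hζ
    exact h_annulus ζ (hζ ▸ (inv_lt_one_of_one_lt₀ (hρ1.trans hρr)).trans hρ1) (hζ ▸ hρr)
  have hV_inner : ∀ η ∈ Metric.sphere (0 : ℂ) ρ⁻¹, ‖Vs η‖ ≤ M := fun η hη => by
    rw [mem_sphere_zero_iff_norm] at hη
    exact h_annulus η (hη ▸ inv_strictAnti₀ hρ₀ hρr)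
      (hη ▸ (inv_lt_one_of_one_lt₀ hρ1).trans (hρ1.trans hρr))
  set C := Real.exp (2 * M) * (ρ - ρ⁻¹)⁻¹
  have hC : 0 ≤ C := mul_nonneg (Real.exp_nonneg _) (inv_nonneg.2 (by
    linarith [inv_lt_one_of_one_lt₀ hρ1]))
  have h_bound : ∀ i j : ℤ, 0 ≤ i → 0 ≤ j → ‖K i j‖ ≤ C * ρ ^ (-(i + j + 1)) := by
    intro i j hi hj
    rw [hK i j hi hj]
    refine (norm_two_pi_I_inv_sq_mul_circleIntegral_circleIntegral_le hρ₀.le (inv_pos.2 hρ₀).le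
      fun ζ hζ η hη => norm_kernel_integrand_le hρ1 (hV_outer ζ hζ) (hV_inner η hη)
        (mem_sphere_zero_iff_norm.1 hζ) (mem_sphere_zero_iff_norm.1 hη) i j).trans_eq ?_
    rw [mul_inv_cancel₀ hρ₀.ne', one_mul]
  refine ⟨⟨C, hC, h_bound⟩, ?_⟩
  exact ((summable_zpow_neg_add_add_one hρ1).mul_left C).of_nonneg_of_le (fun _ => norm_nonneg _)
    fun p => h_bound p.1 p.2 (Int.natCast_nonneg _) (Int.natCast_nonneg _)

theorem kernel_decay_bound
    (r : ℝ) (hr : 1 < r)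
    (vp vm : ℕ → ℂ)
    (hvp : Summable fun k : ℕ => ‖vp (k + 1)‖ * r ^ (k + 1))
    (hvm : Summable fun k : ℕ => ‖vm (k + 1)‖ * r ^ (k + 1))
    (Vs : ℂ → ℂ)
    (hVs : ∀ ζ : ℂ, r⁻¹ < ‖ζ‖ → ‖ζ‖ < r →
      Vs ζ = (∑' k : ℕ, (-1 : ℂ) ^ (k + 1) * vm (k + 1) * ζ ^ (-((k : ℤ) + 1))) -
             ∑' k : ℕ, (-1 : ℂ) ^ (k + 1) * vp (k + 1) * ζ ^ (k + 1))
    (ρ : ℝ) (hρ1 : 1 < ρ) (hρr : ρ < r)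
    (K : ℤ → ℤ → ℂ)
    (hK : ∀ i j : ℤ, 0 ≤ i → 0 ≤ j →
      K i j = ((2 * Real.pi * Complex.I)⁻¹) ^ 2 *
        ∮ ζ in C(0, ρ), (∮ η in C(0, ρ⁻¹),
          Complex.exp (Vs ζ - Vs η) * (ζ - η)⁻¹ * ζ ^ (-i - 1) * η ^ j)) :
    (∃ C : ℝ, 0 ≤ C ∧ ∀ i j : ℤ, 0 ≤ i → 0 ≤ j →
      ‖K i j‖ ≤ C * ρ ^ (-(i + j + 1))) ∧
    Summable fun p : ℕ × ℕ => ‖K p.1 p.2‖ :=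
  kernel_decay_bound_general r vp vm hvp hvm Vs hVs ρ hρ1 hρr K hK
end

section
/- Under the stated setup, for all integers i, j ≥ 0 one has (i − j) K(i,j) = (2πi)^{-2} ∮_{|ζ|=ρ} ∮_{|η|=ρ^{-1}} ((U(ζ) − U(η))/(ζ − η)) · exp(V*(ζ) − V*(η)) · ζ^{-i-1} η^{j} dη dζ, where U(ζ) = ζ·(d/dζ)V*(ζ) = −Σ_{k≥1} (−1)^k k (v⁺_k ζ^k + v⁻_k ζ^{-k}). -/
set_option maxHeartbeats 1000000

open Complex Metric Set MeasureTheory Function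

/-- comparison summability for the differentiated series -/
lemma summable_aux (c : ℕ → ℂ) {r : ℝ} (h0 : 0 < r)
    (hc : Summable fun k => ‖c k‖ * r ^ (k + 1)) {q : ℝ} (hq0 : 0 ≤ q) (hqr : q < r) :
    Summable fun k : ℕ => ((k : ℝ) + 1) * ‖c k‖ * q ^ (k + 1) := by
  set M := ∑' k : ℕ, ‖c k‖ * r ^ (k + 1) with hM
  have hle : ∀ k : ℕ, ‖c k‖ ≤ M / r ^ (k + 1) := by
    intro k
    rw [le_div_iff₀ (by positivity)]
    exact Summable.le_tsum hc k fun m _ => by positivity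
  have hq1 : ‖(q / r : ℝ)‖ < 1 := by
    rw [Real.norm_eq_abs, _root_.abs_of_nonneg (div_nonneg hq0 h0.le)]
    exact (div_lt_one h0).2 hqr
  have h1 : Summable fun n : ℕ => (n : ℝ) ^ 1 * (q / r) ^ n :=
    summable_pow_mul_geometric_of_norm_lt_one 1 hq1
  have h1' : Summable fun n : ℕ => (n : ℝ) * (q / r) ^ n := by simpa using h1
  have h2 : Summable fun k : ℕ => (((k + 1 : ℕ) : ℝ)) * (q / r) ^ (k + 1) :=
    (summable_nat_add_iff 1).2 h1'
  have hsum : Summable fun k : ℕ => M * (((k : ℝ) + 1) * (q / r) ^ (k + 1)) :=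
    Summable.mul_left M (h2.congr fun k => by push_cast; ring)
  refine Summable.of_nonneg_of_le (fun k => by positivity) (fun k => ?_) hsum
  have step : ((k : ℝ) + 1) * ‖c k‖ * q ^ (k + 1) ≤
      ((k : ℝ) + 1) * (M / r ^ (k + 1)) * q ^ (k + 1) := by
    exact mul_le_mul_of_nonneg_right
      (mul_le_mul_of_nonneg_left (hle k) (by positivity)) (by positivity)
  refine step.trans (le_of_eq ?_)
  rw [div_pow]
  field_simp

lemma norm_term_eq (c : ℕ → ℂ) (z : ℂ) (n : ℕ) (k : ℕ) :
    ‖((k : ℂ) + 1) * c k * z ^ n‖ = ((k : ℝ) + 1) * ‖c k‖ * ‖z‖ ^ n := by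
  rw [norm_mul, norm_mul, norm_pow]
  congr 2
  have h : ((k : ℂ) + 1) = ((k + 1 : ℕ) : ℂ) := by push_cast; ring
  rw [h, Complex.norm_natCast]
  push_cast; ring

lemma summable_deriv_terms (c : ℕ → ℂ) {r : ℝ} (h0 : 0 < r)
    (hc : Summable fun k => ‖c k‖ * r ^ (k + 1)) {z : ℂ} (hz : ‖z‖ < r) :
    Summable fun k : ℕ => ((k : ℂ) + 1) * c k * z ^ (k + 1) := by
  apply Summable.of_norm
  exact (summable_aux c h0 hc (norm_nonneg z) hz).congr
    fun k => (norm_term_eq c z (k + 1) k).symm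

/-- the series function and its termwise derivative -/
noncomputable def Fa (c : ℕ → ℂ) : ℂ → ℂ := fun z => ∑' k : ℕ, c k * z ^ (k + 1)

noncomputable def Fd (c : ℕ → ℂ) : ℂ → ℂ := fun z => ∑' k : ℕ, ((k : ℂ) + 1) * c k * z ^ k

lemma summable_u (c : ℕ → ℂ) {r : ℝ} (h0 : 0 < r)
    (hc : Summable fun k => ‖c k‖ * r ^ (k + 1)) {q : ℝ} (hq0 : 0 < q) (hqr : q < r) :
    Summable fun k : ℕ => ((k : ℝ) + 1) * ‖c k‖ * q ^ k := by
  have h2 := (summable_aux c h0 hc hq0.le hqr).mul_left q⁻¹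
  refine h2.congr fun k => ?_
  rw [pow_succ]
  field_simp

lemma hasDerivAt_Fa (c : ℕ → ℂ) {r : ℝ} (h0 : 0 < r)
    (hc : Summable fun k => ‖c k‖ * r ^ (k + 1)) {z : ℂ} (hz : ‖z‖ < r) :
    HasDerivAt (Fa c) (Fd c z) z := by
  set q := (‖z‖ + r) / 2 with hqdef
  have hq0 : 0 < q := by positivity
  have hzq : ‖z‖ < q := by rw [hqdef]; linarith [norm_nonneg z]
  have hqr : q < r := by rw [hqdef]; linarith [norm_nonneg z]
  have hu := summable_u c h0 hc hq0 hqr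
  unfold Fa Fd
  exact hasDerivAt_tsum_of_isPreconnected
    (g := fun k z => c k * z ^ (k + 1))
    (g' := fun k y => ((k : ℂ) + 1) * c k * y ^ k)
    hu Metric.isOpen_ball
    (convex_ball (0:ℂ) q).isPreconnected
    (fun k y _ => by
      have h := (hasDerivAt_pow (k + 1) y).const_mul (c k)
      refine h.congr_deriv ?_
      push_cast
      ring)
    (fun k y hy => by
      rw [mem_ball_zero_iff] at hy
      rw [norm_term_eq c y k k]
      gcongr)
    (mem_ball_self hq0)
    (by
      refine (summable_zero).congr fun k => ?_
      simp)
    (mem_ball_zero_iff.2 hzq)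

lemma continuousOn_Fd (c : ℕ → ℂ) {r : ℝ} (h0 : 0 < r)
    (hc : Summable fun k => ‖c k‖ * r ^ (k + 1)) {q : ℝ} (hq0 : 0 < q) (hqr : q < r) :
    ContinuousOn (Fd c) (Metric.ball (0 : ℂ) q) := by
  have hu := summable_u c h0 hc hq0 hqr
  unfold Fd
  exact continuousOn_tsum
    (fun k => (continuous_const.mul (continuous_pow k)).continuousOn)
    hu
    (fun k y hy => by
      rw [mem_ball_zero_iff] at hy
      rw [norm_term_eq c y k k]
      gcongr)

/-- circle integral of a derivative vanishes -/
lemma circleIntegral_deriv_eq_zero {f f' : ℂ → ℂ} {c : ℂ} {R : ℝ} (hR : 0 ≤ R)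
    (hd : ∀ z ∈ Metric.sphere c R, HasDerivAt f (f' z) z)
    (hc : ContinuousOn f' (Metric.sphere c R)) :
    (∮ z in C(c, R), f' z) = 0 := by
  have hγ : ∀ t : ℝ, HasDerivAt (fun t => f (circleMap c R t))
      (deriv (circleMap c R) t • f' (circleMap c R t)) t := by
    intro t
    have h1 := hasDerivAt_circleMap c R t
    have h2 := hd _ (circleMap_mem_sphere c hR t)
    have h3 := h2.scomp t h1
    simpa [Function.comp_def, deriv_circleMap, smul_eq_mul, mul_comm] using h3
  have hInt : IntervalIntegrable
      (fun t => deriv (circleMap c R) t • f' (circleMap c R t)) volume 0 (2 * Real.pi) := by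
    apply Continuous.intervalIntegrable
    have hcont : Continuous fun t => f' (circleMap c R t) :=
      hc.comp_continuous (continuous_circleMap c R) fun t => circleMap_mem_sphere c hR t
    have hder : Continuous fun t => deriv (circleMap c R) t := by
      simp only [deriv_circleMap]
      exact (continuous_circleMap 0 R).mul continuous_const
    exact hder.smul hcont
  rw [circleIntegral,
    intervalIntegral.integral_eq_sub_of_hasDerivAt (fun t _ => hγ t) hInt]
  have hper : circleMap c R (2 * Real.pi) = circleMap c R 0 := by
    simpa using periodic_circleMap c R 0
  rw [hper, sub_self]

/-- additivity of circle integrals -/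
lemma circleIntegral_add' {f g : ℂ → ℂ} {c : ℂ} {R : ℝ}
    (hf : CircleIntegrable f c R) (hg : CircleIntegrable g c R) :
    (∮ z in C(c, R), (f z + g z)) = (∮ z in C(c, R), f z) + ∮ z in C(c, R), g z := by
  simp only [circleIntegral, smul_add]
  exact intervalIntegral.integral_add hf.out hg.out

/-- Fubini for continuous double interval integrals -/
lemma intervalIntegral_swap_of_continuous {H : ℝ → ℝ → ℂ} (h : Continuous (uncurry H))
    {a b : ℝ} (hab : a ≤ b) :
    (∫ t in a..b, ∫ s in a..b, H t s) = ∫ s in a..b, ∫ t in a..b, H t s := by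
  rw [intervalIntegral.integral_of_le hab]
  simp_rw [intervalIntegral.integral_of_le hab]
  apply MeasureTheory.integral_integral_swap
  rw [Measure.prod_restrict]
  have hK : IsCompact (Icc a b ×ˢ Icc a b) := isCompact_Icc.prod isCompact_Icc
  have h2 : IntegrableOn (uncurry H) (Icc a b ×ˢ Icc a b) (volume.prod volume) := by
    rw [← Measure.volume_eq_prod]
    exact h.continuousOn.integrableOn_compact hK
  exact h2.mono_set (prod_mono Ioc_subset_Icc_self Ioc_subset_Icc_self)

set_option maxHeartbeats 1000000

open Complex Metric Set MeasureTheory Function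

noncomputable def Wf (cp cm : ℕ → ℂ) : ℂ → ℂ := fun z => Fa cm z⁻¹ - Fa cp z

noncomputable def Df (cp cm : ℕ → ℂ) : ℂ → ℂ := fun z => Fd cm z⁻¹ * (-(z ^ 2)⁻¹) - Fd cp z

lemma inv_lt_swap {a b : ℝ} (ha : 0 < a) (h : a⁻¹ < b) : b⁻¹ < a := by
  have hb : 0 < b := lt_trans (inv_pos.2 ha) h
  have h2 : b⁻¹ < (a⁻¹)⁻¹ := by
    apply (inv_lt_inv₀ (by positivity) (by positivity)).2 h
  simpa using h2

lemma hasDerivAt_Wf (cp cm : ℕ → ℂ) {r : ℝ} (h0 : 0 < r)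
    (hcp : Summable fun k => ‖cp k‖ * r ^ (k + 1))
    (hcm : Summable fun k => ‖cm k‖ * r ^ (k + 1))
    {z : ℂ} (hz1 : r⁻¹ < ‖z‖) (hz2 : ‖z‖ < r) :
    HasDerivAt (Wf cp cm) (Df cp cm z) z := by
  have hz0 : z ≠ 0 := by
    intro h
    rw [h, norm_zero] at hz1
    exact absurd hz1 (not_lt.2 (by positivity))
  have hinv : ‖z⁻¹‖ < r := by
    rw [norm_inv]
    exact inv_lt_swap (by positivity) hz1
  have h1 := hasDerivAt_Fa cm h0 hcm hinv
  have h2 := hasDerivAt_inv hz0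
  have h3 := h1.comp z h2
  have h4 := hasDerivAt_Fa cp h0 hcp hz2
  exact h3.sub h4

/-- the four integrand functions -/
noncomputable def Kinf (W : ℂ → ℂ) (i j : ℤ) : ℂ → ℂ → ℂ := fun ζ η =>
  Complex.exp (W ζ - W η) * (ζ - η)⁻¹ * ζ ^ (-i - 1) * η ^ j

noncomputable def Uinf (W D : ℂ → ℂ) (i j : ℤ) : ℂ → ℂ → ℂ := fun ζ η =>
  ((ζ * D ζ - η * D η) / (ζ - η)) * Complex.exp (W ζ - W η) * ζ ^ (-i - 1) * η ^ j

noncomputable def D1f (W D : ℂ → ℂ) (i j : ℤ) : ℂ → ℂ → ℂ := fun ζ η =>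
  Complex.exp (W ζ - W η) * η ^ j *
    (D ζ * ζ ^ (-i) * (ζ - η)⁻¹ + (-(i : ℂ)) * ζ ^ (-i - 1) * (ζ - η)⁻¹ -
      ζ ^ (-i) * ((ζ - η) ^ 2)⁻¹)

noncomputable def D2f (W D : ℂ → ℂ) (i j : ℤ) : ℂ → ℂ → ℂ := fun ζ η =>
  Complex.exp (W ζ - W η) * ζ ^ (-i - 1) *
    (-(D η) * η ^ (j + 1) * (ζ - η)⁻¹ + ((j : ℂ) + 1) * η ^ j * (ζ - η)⁻¹ +
      η ^ (j + 1) * ((ζ - η) ^ 2)⁻¹)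

lemma pointwise_identity (W D : ℂ → ℂ) (i j : ℤ) (ζ η : ℂ)
    (hζ : ζ ≠ 0) (hη : η ≠ 0) (hs : ζ - η ≠ 0) :
    Uinf W D i j ζ η =
      D1f W D i j ζ η + (D2f W D i j ζ η + ((i : ℂ) - (j : ℂ)) * Kinf W i j ζ η) := by
  unfold Uinf D1f D2f Kinf
  have e1 : ζ ^ (-i) = ζ * ζ ^ (-i - 1) := by
    rw [show (-i : ℤ) = (-i - 1) + 1 by ring, zpow_add_one₀ hζ]
    ring
  have e2 : η ^ (j + 1) = η * η ^ j := by
    rw [zpow_add_one₀ hη]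
    ring
  rw [e1, e2]
  have ht : ((ζ - η) ^ 2)⁻¹ = (ζ - η)⁻¹ * (ζ - η)⁻¹ := by rw [sq, mul_inv]
  rw [ht]
  field_simp
  ring

lemma hasDerivAt_P2 (W D : ℂ → ℂ) (i j : ℤ) (ζ η : ℂ)
    (hη0 : η ≠ 0) (hsub : ζ - η ≠ 0) (hWη : HasDerivAt W (D η) η) :
    HasDerivAt (fun y => Complex.exp (W ζ - W y) * ζ ^ (-i - 1) * (y ^ (j + 1) * (ζ - y)⁻¹))
      (D2f W D i j ζ η) η := by
  have hE : HasDerivAt (fun y => Complex.exp (W ζ - W y))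
      (Complex.exp (W ζ - W η) * (-(D η))) η := by
    have h := (hWη.const_sub (W ζ)).cexp
    convert h using 1
  have h3 : HasDerivAt (fun y : ℂ => y ^ (j + 1)) (((j + 1 : ℤ) : ℂ) * η ^ (j + 1 - 1)) η :=
    hasDerivAt_zpow (j + 1) η (Or.inl hη0)
  have h4 : HasDerivAt (fun y : ℂ => (ζ - y)⁻¹) (((ζ - η) ^ 2)⁻¹) η := by
    have hi := hasDerivAt_inv hsub
    have hin : HasDerivAt (fun y : ℂ => ζ - y) (-1) η := (hasDerivAt_id η).const_sub ζ
    have h := hi.comp η hin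
    refine h.congr_deriv ?_
    · ring
  have h := (hE.mul_const (ζ ^ (-i - 1))).mul (h3.mul h4)
  refine h.congr_deriv ?_
  unfold D2f
  simp only [Pi.mul_apply]
  have hexp : (j + 1 - 1 : ℤ) = j := by ring
  rw [hexp]
  push_cast
  ring

lemma hasDerivAt_P1 (W D : ℂ → ℂ) (i j : ℤ) (ζ η : ℂ)
    (hζ0 : ζ ≠ 0) (hsub : ζ - η ≠ 0) (hWζ : HasDerivAt W (D ζ) ζ) :
    HasDerivAt (fun x => Complex.exp (W x - W η) * η ^ j * (x ^ (-i) * (x - η)⁻¹))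
      (D1f W D i j ζ η) ζ := by
  have hE : HasDerivAt (fun x => Complex.exp (W x - W η))
      (Complex.exp (W ζ - W η) * D ζ) ζ := (hWζ.sub_const (W η)).cexp
  have h3 : HasDerivAt (fun x : ℂ => x ^ (-i)) (((-i : ℤ) : ℂ) * ζ ^ (-i - 1)) ζ :=
    hasDerivAt_zpow (-i) ζ (Or.inl hζ0)
  have h4 : HasDerivAt (fun x : ℂ => (x - η)⁻¹) (-(((ζ - η) ^ 2)⁻¹)) ζ := by
    have hi := hasDerivAt_inv hsub
    have hin : HasDerivAt (fun x : ℂ => x - η) 1 ζ := (hasDerivAt_id ζ).sub_const η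
    have h := hi.comp ζ hin
    refine h.congr_deriv ?_
    · ring
  have h := (hE.mul_const (η ^ j)).mul (h3.mul h4)
  refine h.congr_deriv ?_
  unfold D1f
  simp only [Pi.mul_apply]
  push_cast
  ring
lemma circleIntegral_const_mul (a : ℂ) (f : ℂ → ℂ) (c : ℂ) (R : ℝ) :
    (∮ z in C(c, R), a * f z) = a * ∮ z in C(c, R), f z := by
  simpa [smul_eq_mul] using circleIntegral.integral_smul a f c R

lemma CircleIntegrable.const_mul' {f : ℂ → ℂ} {c : ℂ} {R : ℝ}
    (hf : CircleIntegrable f c R) (a : ℂ) : CircleIntegrable (fun z => a * f z) c R := by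
  have h : IntervalIntegrable (fun θ : ℝ => f (circleMap c R θ)) volume 0 (2 * Real.pi) := hf
  exact h.const_mul a

lemma contOn_prod_pieces (W D : ℂ → ℂ) (i j : ℤ) {ρ : ℝ} (hρ1 : 1 < ρ)
    (hWc : ContinuousOn W (sphere (0 : ℂ) ρ ∪ sphere (0 : ℂ) ρ⁻¹))
    (hDc : ContinuousOn D (sphere (0 : ℂ) ρ ∪ sphere (0 : ℂ) ρ⁻¹)) :
    ContinuousOn (fun p : ℂ × ℂ => D1f W D i j p.1 p.2)
        (sphere (0 : ℂ) ρ ×ˢ sphere (0 : ℂ) ρ⁻¹) ∧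
      ContinuousOn (fun p : ℂ × ℂ => D2f W D i j p.1 p.2)
        (sphere (0 : ℂ) ρ ×ˢ sphere (0 : ℂ) ρ⁻¹) ∧
      ContinuousOn (fun p : ℂ × ℂ => Kinf W i j p.1 p.2)
        (sphere (0 : ℂ) ρ ×ˢ sphere (0 : ℂ) ρ⁻¹) := by
  have hρ0 : (0 : ℝ) < ρ := lt_trans one_pos hρ1
  have hρi0 : (0 : ℝ) < ρ⁻¹ := by positivity
  have hρi1 : ρ⁻¹ < 1 := by
    have := (inv_lt_inv₀ hρ0 one_pos).2 hρ1
    simpa using this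
  set T := sphere (0 : ℂ) ρ ×ˢ sphere (0 : ℂ) ρ⁻¹ with hTdef
  have hmem1 : ∀ p : ℂ × ℂ, p ∈ T → ‖p.1‖ = ρ := fun p hp =>
    mem_sphere_zero_iff_norm.1 hp.1
  have hmem2 : ∀ p : ℂ × ℂ, p ∈ T → ‖p.2‖ = ρ⁻¹ := fun p hp =>
    mem_sphere_zero_iff_norm.1 hp.2
  have hne1 : ∀ p ∈ T, p.1 ≠ 0 := by
    intro p hp h
    have := hmem1 p hp
    rw [h, norm_zero] at this
    linarith
  have hne2 : ∀ p ∈ T, p.2 ≠ 0 := by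
    intro p hp h
    have := hmem2 p hp
    rw [h, norm_zero] at this
    linarith
  have hnesub : ∀ p ∈ T, p.1 - p.2 ≠ 0 := by
    intro p hp h
    have h1 := hmem1 p hp
    have h2 := hmem2 p hp
    rw [sub_eq_zero] at h
    rw [h, h2] at h1
    linarith
  have hWc1 : ContinuousOn (fun p : ℂ × ℂ => W p.1) T :=
    hWc.comp continuous_fst.continuousOn fun p hp => Or.inl hp.1
  have hWc2 : ContinuousOn (fun p : ℂ × ℂ => W p.2) T :=
    hWc.comp continuous_snd.continuousOn fun p hp => Or.inr hp.2
  have hE : ContinuousOn (fun p : ℂ × ℂ => Complex.exp (W p.1 - W p.2)) T :=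
    Complex.continuous_exp.comp_continuousOn (hWc1.sub hWc2)
  have hDc1 : ContinuousOn (fun p : ℂ × ℂ => D p.1) T :=
    hDc.comp continuous_fst.continuousOn fun p hp => Or.inl hp.1
  have hDc2 : ContinuousOn (fun p : ℂ × ℂ => D p.2) T :=
    hDc.comp continuous_snd.continuousOn fun p hp => Or.inr hp.2
  have hz : ∀ n : ℤ, ContinuousOn (fun p : ℂ × ℂ => p.1 ^ n) T := by
    intro n p hp
    exact ((continuousAt_zpow₀ p.1 n (Or.inl (hne1 p hp))).comp
      continuous_fst.continuousAt).continuousWithinAt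
  have hw : ∀ n : ℤ, ContinuousOn (fun p : ℂ × ℂ => p.2 ^ n) T := by
    intro n p hp
    exact ((continuousAt_zpow₀ p.2 n (Or.inl (hne2 p hp))).comp
      continuous_snd.continuousAt).continuousWithinAt
  have hs : ContinuousOn (fun p : ℂ × ℂ => (p.1 - p.2)⁻¹) T :=
    ((continuous_fst.sub continuous_snd).continuousOn).inv₀ fun p hp => hnesub p hp
  have ht : ContinuousOn (fun p : ℂ × ℂ => ((p.1 - p.2) ^ 2)⁻¹) T :=
    (((continuous_fst.sub continuous_snd).pow 2).continuousOn).inv₀ fun p hp =>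
      pow_ne_zero 2 (hnesub p hp)
  refine ⟨?_, ?_, ?_⟩
  · simp only [D1f]
    exact (hE.mul (hw j)).mul
      ((((hDc1.mul (hz (-i))).mul hs).add
        ((continuousOn_const.mul (hz (-i - 1))).mul hs)).sub ((hz (-i)).mul ht))
  · simp only [D2f]
    exact (hE.mul (hz (-i - 1))).mul
      ((((hDc2.neg.mul (hw (j + 1))).mul hs).add
        ((continuousOn_const.mul (hw j)).mul hs)).add ((hw (j + 1)).mul ht))
  · simp only [Kinf]
    exact ((hE.mul hs).mul (hz (-i - 1))).mul (hw j)
lemma contOn_left {G : ℂ → ℂ → ℂ} {s t : Set ℂ}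
    (h : ContinuousOn (fun p : ℂ × ℂ => G p.1 p.2) (s ×ˢ t)) {ζ : ℂ} (hζ : ζ ∈ s) :
    ContinuousOn (fun η => G ζ η) t :=
  h.comp (Continuous.continuousOn (continuous_const.prodMk continuous_id))
    fun _ hη => Set.mk_mem_prod hζ hη

lemma contOn_right {G : ℂ → ℂ → ℂ} {s t : Set ℂ}
    (h : ContinuousOn (fun p : ℂ × ℂ => G p.1 p.2) (s ×ˢ t)) {η : ℂ} (hη : η ∈ t) :
    ContinuousOn (fun ζ => G ζ η) s :=
  h.comp (Continuous.continuousOn (continuous_id.prodMk continuous_const))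
    fun _ hζ => Set.mk_mem_prod hζ hη

lemma cont_circle_prod {G : ℂ → ℂ → ℂ} {ρ1 ρ2 : ℝ} (h1 : 0 ≤ ρ1) (h2 : 0 ≤ ρ2)
    (h : ContinuousOn (fun p : ℂ × ℂ => G p.1 p.2)
      (sphere (0 : ℂ) ρ1 ×ˢ sphere (0 : ℂ) ρ2)) :
    Continuous fun p : ℝ × ℝ => G (circleMap 0 ρ1 p.1) (circleMap 0 ρ2 p.2) :=
  h.comp_continuous
    (((continuous_circleMap 0 ρ1).comp continuous_fst).prodMk
      ((continuous_circleMap 0 ρ2).comp continuous_snd))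
    fun _ => Set.mk_mem_prod (circleMap_mem_sphere _ h1 _) (circleMap_mem_sphere _ h2 _)
theorem kernel_integrable_form
    (r : ℝ) (hr : 1 < r)
    (vp vm : ℕ → ℂ)
    (hvp : Summable fun k : ℕ => ‖vp (k + 1)‖ * r ^ (k + 1))
    (hvm : Summable fun k : ℕ => ‖vm (k + 1)‖ * r ^ (k + 1))
    (Vs : ℂ → ℂ)
    (hVs : ∀ ζ : ℂ, r⁻¹ < ‖ζ‖ → ‖ζ‖ < r →
      Vs ζ = (∑' k : ℕ, (-1 : ℂ) ^ (k + 1) * vm (k + 1) * ζ ^ (-((k : ℤ) + 1))) -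
             ∑' k : ℕ, (-1 : ℂ) ^ (k + 1) * vp (k + 1) * ζ ^ (k + 1))
    (U : ℂ → ℂ)
    (hU : ∀ ζ : ℂ, r⁻¹ < ‖ζ‖ → ‖ζ‖ < r →
      U ζ = -∑' k : ℕ, (-1 : ℂ) ^ (k + 1) * ((k : ℂ) + 1) *
        (vp (k + 1) * ζ ^ (k + 1) + vm (k + 1) * ζ ^ (-((k : ℤ) + 1))))
    (ρ : ℝ) (hρ1 : 1 < ρ) (hρr : ρ < r)
    (K : ℤ → ℤ → ℂ)
    (hK : ∀ i j : ℤ, 0 ≤ i → 0 ≤ j →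
      K i j = ((2 * Real.pi * Complex.I)⁻¹) ^ 2 *
        ∮ ζ in C(0, ρ), (∮ η in C(0, ρ⁻¹),
          Complex.exp (Vs ζ - Vs η) * (ζ - η)⁻¹ * ζ ^ (-i - 1) * η ^ j)) :
    ∀ i j : ℤ, 0 ≤ i → 0 ≤ j →
      ((i : ℂ) - (j : ℂ)) * K i j = ((2 * Real.pi * Complex.I)⁻¹) ^ 2 *
        ∮ ζ in C(0, ρ), (∮ η in C(0, ρ⁻¹),
          ((U ζ - U η) / (ζ - η)) * Complex.exp (Vs ζ - Vs η) *
            ζ ^ (-i - 1) * η ^ j) := by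
  intro i j hi hj
  have h0r : (0 : ℝ) < r := lt_trans one_pos hr
  have hρ0 : (0 : ℝ) < ρ := lt_trans one_pos hρ1
  have hρi0 : (0 : ℝ) < ρ⁻¹ := by positivity
  have hρi1 : ρ⁻¹ < 1 := by
    have := (inv_lt_inv₀ hρ0 one_pos).2 hρ1; simpa using this
  have hri1 : r⁻¹ < 1 := by
    have := (inv_lt_inv₀ h0r one_pos).2 hr; simpa using this
  have hrρ : r⁻¹ < ρ⁻¹ := (inv_lt_inv₀ h0r hρ0).2 hρr
  set q : ℝ := (ρ + r) / 2 with hqdef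
  have hq0 : (0 : ℝ) < q := by rw [hqdef]; positivity
  have hρq : ρ < q := by rw [hqdef]; linarith
  have hqr : q < r := by rw [hqdef]; linarith
  have h1q : (1 : ℝ) < q := lt_trans hρ1 hρq
  have hqρi : q⁻¹ < ρ⁻¹ := (inv_lt_inv₀ hq0 hρ0).2 hρq
  have hqi1 : q⁻¹ < 1 := by
    have := (inv_lt_inv₀ hq0 one_pos).2 h1q; simpa using this
  set cp : ℕ → ℂ := fun k => (-1 : ℂ) ^ (k + 1) * vp (k + 1) with hcpdef
  set cm : ℕ → ℂ := fun k => (-1 : ℂ) ^ (k + 1) * vm (k + 1) with hcmdef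
  have hcp : Summable fun k : ℕ => ‖cp k‖ * r ^ (k + 1) := by
    refine hvp.congr fun k => ?_
    simp [hcpdef, norm_mul]
  have hcm : Summable fun k : ℕ => ‖cm k‖ * r ^ (k + 1) := by
    refine hvm.congr fun k => ?_
    simp [hcmdef, norm_mul]
  set W : ℂ → ℂ := Wf cp cm with hWdef
  set D : ℂ → ℂ := Df cp cm with hDdef
  have hWd : ∀ z : ℂ, r⁻¹ < ‖z‖ → ‖z‖ < r → HasDerivAt W (D z) z := fun z h1 h2 =>
    hasDerivAt_Wf cp cm h0r hcp hcm h1 h2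
  have hannρ : ∀ ζ ∈ sphere (0 : ℂ) ρ, r⁻¹ < ‖ζ‖ ∧ ‖ζ‖ < r := by
    intro ζ hζ
    rw [mem_sphere_zero_iff_norm] at hζ
    rw [hζ]
    exact ⟨by linarith, hρr⟩
  have hannρi : ∀ η ∈ sphere (0 : ℂ) ρ⁻¹, r⁻¹ < ‖η‖ ∧ ‖η‖ < r := by
    intro η hη
    rw [mem_sphere_zero_iff_norm] at hη
    rw [hη]
    exact ⟨hrρ, by linarith⟩
  have hζ0 : ∀ ζ ∈ sphere (0 : ℂ) ρ, ζ ≠ 0 := by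
    intro ζ hζ h
    rw [mem_sphere_zero_iff_norm, h, norm_zero] at hζ
    linarith
  have hη0' : ∀ η ∈ sphere (0 : ℂ) ρ⁻¹, η ≠ 0 := by
    intro η hη h
    rw [mem_sphere_zero_iff_norm, h, norm_zero] at hη
    linarith
  have hsubne : ∀ ζ ∈ sphere (0 : ℂ) ρ, ∀ η ∈ sphere (0 : ℂ) ρ⁻¹, ζ - η ≠ 0 := by
    intro ζ hζ η hη h
    rw [mem_sphere_zero_iff_norm] at hζ hη
    rw [sub_eq_zero] at h
    rw [h, hη] at hζ
    linarith
  -- Vs = W on the annulus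
  have hVsW : ∀ z : ℂ, r⁻¹ < ‖z‖ → ‖z‖ < r → Vs z = W z := by
    intro z h1 h2
    rw [hVs z h1 h2, hWdef]
    unfold Wf Fa
    congr 1
    refine tsum_congr fun k => ?_
    have hcast : (-((k : ℤ) + 1)) = -((k + 1 : ℕ) : ℤ) := by push_cast; ring
    rw [hcast, zpow_neg, zpow_natCast, ← inv_pow]
  -- U z = z * D z on the annulus
  have hUD : ∀ z : ℂ, r⁻¹ < ‖z‖ → ‖z‖ < r → U z = z * D z := by
    intro z h1 h2
    have hz0 : z ≠ 0 := by
      intro h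
      rw [h, norm_zero] at h1
      exact absurd h1 (not_lt.2 (by positivity))
    have hinv : ‖z⁻¹‖ < r := by
      rw [norm_inv]
      exact inv_lt_swap (by positivity) h1
    have s1 : Summable fun k : ℕ => ((k : ℂ) + 1) * cp k * z ^ (k + 1) :=
      summable_deriv_terms cp h0r hcp h2
    have s2 : Summable fun k : ℕ => ((k : ℂ) + 1) * cm k * (z⁻¹) ^ (k + 1) :=
      summable_deriv_terms cm h0r hcm hinv
    rw [hU z h1 h2]
    have hterm : ∀ k : ℕ, (-1 : ℂ) ^ (k + 1) * ((k : ℂ) + 1) *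
        (vp (k + 1) * z ^ (k + 1) + vm (k + 1) * z ^ (-((k : ℤ) + 1)))
        = ((k : ℂ) + 1) * cp k * z ^ (k + 1) + ((k : ℂ) + 1) * cm k * (z⁻¹) ^ (k + 1) := by
      intro k
      have hcast : (-((k : ℤ) + 1)) = -((k + 1 : ℕ) : ℤ) := by push_cast; ring
      rw [hcast, zpow_neg, zpow_natCast, ← inv_pow, hcpdef, hcmdef]
      ring
    rw [tsum_congr hterm, Summable.tsum_add s1 s2]
    have e1 : z * Fd cp z = ∑' k : ℕ, ((k : ℂ) + 1) * cp k * z ^ (k + 1) := by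
      unfold Fd
      rw [← tsum_mul_left]
      exact tsum_congr fun k => by ring
    have e2 : z⁻¹ * Fd cm z⁻¹ = ∑' k : ℕ, ((k : ℂ) + 1) * cm k * (z⁻¹) ^ (k + 1) := by
      unfold Fd
      rw [← tsum_mul_left]
      exact tsum_congr fun k => by ring
    have e3 : z * D z = -(z⁻¹ * Fd cm z⁻¹) - z * Fd cp z := by
      rw [hDdef]
      unfold Df
      field_simp
    rw [e3, ← e1, ← e2]
    ring
  -- continuity of W and D on the union of the two spheres
  have hWcont : ContinuousOn W (sphere (0 : ℂ) ρ ∪ sphere (0 : ℂ) ρ⁻¹) := by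
    intro z hz
    have ha : r⁻¹ < ‖z‖ ∧ ‖z‖ < r := by
      rcases hz with h | h
      · exact hannρ z h
      · exact hannρi z h
    exact ((hWd z ha.1 ha.2).continuousAt).continuousWithinAt
  have hDcont : ContinuousOn D (sphere (0 : ℂ) ρ ∪ sphere (0 : ℂ) ρ⁻¹) := by
    have hsub : (sphere (0 : ℂ) ρ ∪ sphere (0 : ℂ) ρ⁻¹) ⊆
        {z : ℂ | q⁻¹ < ‖z‖ ∧ ‖z‖ < q} := by
      intro z hz
      rcases hz with h | h <;> rw [mem_sphere_zero_iff_norm] at h <;>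
        refine ⟨?_, ?_⟩ <;> rw [h] <;> linarith
    refine ContinuousOn.mono ?_ hsub
    have hz0 : ∀ z : ℂ, z ∈ {z : ℂ | q⁻¹ < ‖z‖ ∧ ‖z‖ < q} → z ≠ 0 := by
      intro z hz h
      have h1 : q⁻¹ < ‖z‖ := hz.1
      rw [h, norm_zero] at h1
      have h2 : (0:ℝ) < q⁻¹ := by positivity
      linarith
    have hFm := continuousOn_Fd cm h0r hcm hq0 hqr
    have hFp := continuousOn_Fd cp h0r hcp hq0 hqr
    have h1 : ContinuousOn (fun z : ℂ => Fd cm z⁻¹) {z : ℂ | q⁻¹ < ‖z‖ ∧ ‖z‖ < q} := by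
      refine hFm.comp (continuousOn_id.inv₀ fun z hz => hz0 z hz) ?_
      intro z hz
      rw [mem_ball_zero_iff]
      show ‖(z : ℂ)⁻¹‖ < q
      rw [norm_inv]
      exact inv_lt_swap (by positivity) hz.1
    have h2 : ContinuousOn (fun z : ℂ => -((z ^ 2)⁻¹)) {z : ℂ | q⁻¹ < ‖z‖ ∧ ‖z‖ < q} :=
      (((continuous_pow 2).continuousOn).inv₀ fun z hz => pow_ne_zero 2 (hz0 z hz)).neg
    have h3 : ContinuousOn (Fd cp) {z : ℂ | q⁻¹ < ‖z‖ ∧ ‖z‖ < q} :=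
      hFp.mono fun z hz => mem_ball_zero_iff.2 hz.2
    rw [hDdef]
    unfold Df
    exact (h1.mul h2).sub h3
  obtain ⟨hD1T, hD2T, hKT⟩ := contOn_prod_pieces W D i j hρ1 hWcont hDcont
  -- inner integrability facts (for fixed ζ on the outer sphere)
  have hD1Intη : ∀ ζ ∈ sphere (0 : ℂ) ρ,
      ContinuousOn (fun η => D1f W D i j ζ η) (sphere (0 : ℂ) ρ⁻¹) := by
    intro ζ hζ
    exact contOn_left hD1T hζ
  have hD2Intη : ∀ ζ ∈ sphere (0 : ℂ) ρ,
      ContinuousOn (fun η => D2f W D i j ζ η) (sphere (0 : ℂ) ρ⁻¹) := by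
    intro ζ hζ
    exact contOn_left hD2T hζ
  have hKIntη : ∀ ζ ∈ sphere (0 : ℂ) ρ,
      ContinuousOn (fun η => Kinf W i j ζ η) (sphere (0 : ℂ) ρ⁻¹) := by
    intro ζ hζ
    exact contOn_left hKT hζ
  have hD1Intζ : ∀ η ∈ sphere (0 : ℂ) ρ⁻¹,
      ContinuousOn (fun ζ => D1f W D i j ζ η) (sphere (0 : ℂ) ρ) := by
    intro η hη
    exact contOn_right hD1T hη
  -- step 1 : the η-integral of D2f vanishes
  have step1 : ∀ ζ ∈ sphere (0 : ℂ) ρ, (∮ η in C(0, ρ⁻¹), D2f W D i j ζ η) = 0 := by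
    intro ζ hζ
    refine circleIntegral_deriv_eq_zero
      (f := fun y => Complex.exp (W ζ - W y) * ζ ^ (-i - 1) * (y ^ (j + 1) * (ζ - y)⁻¹))
      hρi0.le (fun η hη => hasDerivAt_P2 W D i j ζ η (hη0' η hη) (hsubne ζ hζ η hη)
        (hWd η (hannρi η hη).1 (hannρi η hη).2)) (hD2Intη ζ hζ)
  -- step 2 : the ζ-integral of D1f vanishes
  have step2 : ∀ η ∈ sphere (0 : ℂ) ρ⁻¹, (∮ ζ in C(0, ρ), D1f W D i j ζ η) = 0 := by
    intro η hη
    refine circleIntegral_deriv_eq_zero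
      (f := fun x => Complex.exp (W x - W η) * η ^ j * (x ^ (-i) * (x - η)⁻¹))
      hρ0.le (fun ζ hζ => hasDerivAt_P1 W D i j ζ η (hζ0 ζ hζ) (hsubne ζ hζ η hη)
        (hWd ζ (hannρ ζ hζ).1 (hannρ ζ hζ).2)) (hD1Intζ η hη)
  -- Fubini : the double integral of D1f vanishes
  have fub : (∮ ζ in C(0, ρ), ∮ η in C(0, ρ⁻¹), D1f W D i j ζ η) = 0 := by
    rw [circleIntegral]
    have hrw : ∀ θ : ℝ, deriv (circleMap 0 ρ) θ •
        (∮ η in C(0, ρ⁻¹), D1f W D i j (circleMap 0 ρ θ) η)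
        = ∫ s in (0 : ℝ)..(2 * Real.pi), deriv (circleMap 0 ρ) θ •
            (deriv (circleMap 0 ρ⁻¹) s •
              D1f W D i j (circleMap 0 ρ θ) (circleMap 0 ρ⁻¹ s)) := by
      intro θ
      rw [circleIntegral, ← intervalIntegral.integral_smul]
    rw [intervalIntegral.integral_congr fun θ _ => hrw θ]
    have hD1c : Continuous fun p : ℝ × ℝ =>
        D1f W D i j (circleMap 0 ρ p.1) (circleMap 0 ρ⁻¹ p.2) :=
      cont_circle_prod hρ0.le hρi0.le hD1T
    have hHcont : Continuous (uncurry fun t s : ℝ => deriv (circleMap 0 ρ) t •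
        (deriv (circleMap 0 ρ⁻¹) s •
          D1f W D i j (circleMap 0 ρ t) (circleMap 0 ρ⁻¹ s))) := by
      have h1 : Continuous fun p : ℝ × ℝ => deriv (circleMap 0 ρ) p.1 := by
        simp only [deriv_circleMap]
        exact ((continuous_circleMap 0 ρ).comp continuous_fst).mul continuous_const
      have h2 : Continuous fun p : ℝ × ℝ => deriv (circleMap 0 ρ⁻¹) p.2 := by
        simp only [deriv_circleMap]
        exact ((continuous_circleMap 0 ρ⁻¹).comp continuous_snd).mul continuous_const
      exact h1.smul (h2.smul hD1c)
    rw [intervalIntegral_swap_of_continuous hHcont (by positivity)]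
    have hinner : ∀ s : ℝ, (∫ t in (0 : ℝ)..(2 * Real.pi), deriv (circleMap 0 ρ) t •
        (deriv (circleMap 0 ρ⁻¹) s •
          D1f W D i j (circleMap 0 ρ t) (circleMap 0 ρ⁻¹ s))) = 0 := by
      intro s
      have hcomm : ∀ t : ℝ, deriv (circleMap 0 ρ) t •
          (deriv (circleMap 0 ρ⁻¹) s •
            D1f W D i j (circleMap 0 ρ t) (circleMap 0 ρ⁻¹ s))
          = deriv (circleMap 0 ρ⁻¹) s •
            (deriv (circleMap 0 ρ) t •
              D1f W D i j (circleMap 0 ρ t) (circleMap 0 ρ⁻¹ s)) := by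
        intro t
        simp only [smul_eq_mul]
        ring
      rw [intervalIntegral.integral_congr fun t _ => hcomm t,
        intervalIntegral.integral_smul]
      have h0 : (∮ ζ in C(0, ρ), D1f W D i j ζ (circleMap 0 ρ⁻¹ s)) = 0 :=
        step2 _ (circleMap_mem_sphere _ hρi0.le s)
      rw [circleIntegral] at h0
      rw [h0, smul_zero]
    rw [intervalIntegral.integral_congr fun s _ => hinner s]
    simp
  -- outer circle-integrability of the two parameterized inner integrals
  have hD1out : CircleIntegrable (fun ζ => ∮ η in C(0, ρ⁻¹), D1f W D i j ζ η) 0 ρ := by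
    have hcont : Continuous fun θ : ℝ =>
        ∮ η in C(0, ρ⁻¹), D1f W D i j (circleMap 0 ρ θ) η := by
      simp only [circleIntegral]
      apply intervalIntegral.continuous_parametric_intervalIntegral_of_continuous'
      show Continuous fun p : ℝ × ℝ => deriv (circleMap 0 ρ⁻¹) p.2 •
        D1f W D i j (circleMap 0 ρ p.1) (circleMap 0 ρ⁻¹ p.2)
      have h2 : Continuous fun p : ℝ × ℝ => deriv (circleMap 0 ρ⁻¹) p.2 := by
        simp only [deriv_circleMap]
        exact ((continuous_circleMap 0 ρ⁻¹).comp continuous_snd).mul continuous_const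
      have hD1c : Continuous fun p : ℝ × ℝ =>
          D1f W D i j (circleMap 0 ρ p.1) (circleMap 0 ρ⁻¹ p.2) :=
        cont_circle_prod hρ0.le hρi0.le hD1T
      exact h2.smul hD1c
    exact hcont.intervalIntegrable 0 (2 * Real.pi)
  have hKout : CircleIntegrable (fun ζ => ∮ η in C(0, ρ⁻¹), Kinf W i j ζ η) 0 ρ := by
    have hcont : Continuous fun θ : ℝ =>
        ∮ η in C(0, ρ⁻¹), Kinf W i j (circleMap 0 ρ θ) η := by
      simp only [circleIntegral]
      apply intervalIntegral.continuous_parametric_intervalIntegral_of_continuous'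
      show Continuous fun p : ℝ × ℝ => deriv (circleMap 0 ρ⁻¹) p.2 •
        Kinf W i j (circleMap 0 ρ p.1) (circleMap 0 ρ⁻¹ p.2)
      have h2 : Continuous fun p : ℝ × ℝ => deriv (circleMap 0 ρ⁻¹) p.2 := by
        simp only [deriv_circleMap]
        exact ((continuous_circleMap 0 ρ⁻¹).comp continuous_snd).mul continuous_const
      have hKc : Continuous fun p : ℝ × ℝ =>
          Kinf W i j (circleMap 0 ρ p.1) (circleMap 0 ρ⁻¹ p.2) :=
        cont_circle_prod hρ0.le hρi0.le hKT
      exact h2.smul hKc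
    exact hcont.intervalIntegrable 0 (2 * Real.pi)
  -- the inner splitting
  have inner_split : ∀ ζ ∈ sphere (0 : ℂ) ρ,
      (∮ η in C(0, ρ⁻¹), Uinf W D i j ζ η)
        = (∮ η in C(0, ρ⁻¹), D1f W D i j ζ η) +
          ((i : ℂ) - (j : ℂ)) * ∮ η in C(0, ρ⁻¹), Kinf W i j ζ η := by
    intro ζ hζ
    have hint1 : CircleIntegrable (fun η => D1f W D i j ζ η) 0 ρ⁻¹ :=
      (hD1Intη ζ hζ).circleIntegrable hρi0.le
    have hint2 : CircleIntegrable (fun η => D2f W D i j ζ η) 0 ρ⁻¹ :=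
      (hD2Intη ζ hζ).circleIntegrable hρi0.le
    have hint3 : CircleIntegrable (fun η => Kinf W i j ζ η) 0 ρ⁻¹ :=
      (hKIntη ζ hζ).circleIntegrable hρi0.le
    calc (∮ η in C(0, ρ⁻¹), Uinf W D i j ζ η)
        = ∮ η in C(0, ρ⁻¹), (D1f W D i j ζ η +
            (D2f W D i j ζ η + ((i : ℂ) - (j : ℂ)) * Kinf W i j ζ η)) :=
          circleIntegral.integral_congr hρi0.le fun η hη =>
            pointwise_identity W D i j ζ η (hζ0 ζ hζ) (hη0' η hη) (hsubne ζ hζ η hη)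
      _ = (∮ η in C(0, ρ⁻¹), D1f W D i j ζ η) +
          ∮ η in C(0, ρ⁻¹), (D2f W D i j ζ η + ((i : ℂ) - (j : ℂ)) * Kinf W i j ζ η) :=
          circleIntegral_add' hint1 (hint2.add (hint3.const_mul' _))
      _ = (∮ η in C(0, ρ⁻¹), D1f W D i j ζ η) +
          ((∮ η in C(0, ρ⁻¹), D2f W D i j ζ η) +
            ∮ η in C(0, ρ⁻¹), ((i : ℂ) - (j : ℂ)) * Kinf W i j ζ η) := by
          rw [circleIntegral_add' hint2 (hint3.const_mul' _)]
      _ = (∮ η in C(0, ρ⁻¹), D1f W D i j ζ η) +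
          ((i : ℂ) - (j : ℂ)) * ∮ η in C(0, ρ⁻¹), Kinf W i j ζ η := by
          rw [step1 ζ hζ, zero_add, circleIntegral_const_mul]
  -- the outer step
  have outer : (∮ ζ in C(0, ρ), ∮ η in C(0, ρ⁻¹), Uinf W D i j ζ η)
      = ((i : ℂ) - (j : ℂ)) * ∮ ζ in C(0, ρ), ∮ η in C(0, ρ⁻¹), Kinf W i j ζ η := by
    rw [circleIntegral.integral_congr hρ0.le fun ζ hζ => inner_split ζ hζ]
    rw [circleIntegral_add' hD1out (hKout.const_mul' _)]
    rw [fub, zero_add, circleIntegral_const_mul]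
  -- final assembly
  rw [hK i j hi hj]
  have hKcongr : (∮ ζ in C(0, ρ), (∮ η in C(0, ρ⁻¹),
        Complex.exp (Vs ζ - Vs η) * (ζ - η)⁻¹ * ζ ^ (-i - 1) * η ^ j))
      = ∮ ζ in C(0, ρ), ∮ η in C(0, ρ⁻¹), Kinf W i j ζ η := by
    refine circleIntegral.integral_congr hρ0.le fun ζ hζ => ?_
    refine circleIntegral.integral_congr hρi0.le fun η hη => ?_
    unfold Kinf
    rw [hVsW ζ (hannρ ζ hζ).1 (hannρ ζ hζ).2, hVsW η (hannρi η hη).1 (hannρi η hη).2]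
  have hUcongr : (∮ ζ in C(0, ρ), (∮ η in C(0, ρ⁻¹),
        ((U ζ - U η) / (ζ - η)) * Complex.exp (Vs ζ - Vs η) * ζ ^ (-i - 1) * η ^ j))
      = ∮ ζ in C(0, ρ), ∮ η in C(0, ρ⁻¹), Uinf W D i j ζ η := by
    refine circleIntegral.integral_congr hρ0.le fun ζ hζ => ?_
    refine circleIntegral.integral_congr hρi0.le fun η hη => ?_
    unfold Uinf
    rw [hVsW ζ (hannρ ζ hζ).1 (hannρ ζ hζ).2, hVsW η (hannρi η hη).1 (hannρi η hη).2,
      hUD ζ (hannρ ζ hζ).1 (hannρ ζ hζ).2, hUD η (hannρi η hη).1 (hannρi η hη).2]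
  rw [hKcongr, hUcongr, outer]
  ring
end

section
/- For every θ ∈ ℂ with θ ≠ 0, every β ∈ ℂ, every integer m ≥ 0, and every c with 0 < c < 1/|θ|, one has (2πi)^{-1} ∮_{|η|=c} (1 − θη)^{β} e^{θ/η} η^{m−1} dη = θ^m · Φ(−β, m+1; θ²) / m!. -/
open Complex

/-- The Pochhammer symbol `(a)_m = a (a+1) ⋯ (a+m−1)`, with `(a)_0 = 1`. -/
noncomputable def pochhammer' (a : ℂ) (m : ℕ) : ℂ := ∏ k ∈ Finset.range m, (a + (k : ℂ))

/-- The confluent hypergeometric function `Φ(a, c; x)` with positive integer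
parameter `c`. -/
noncomputable def confluentHyp (a : ℂ) (c : ℕ) (x : ℂ) : ℂ :=
  ∑' n : ℕ, pochhammer' a n * x ^ n / (pochhammer' (c : ℂ) n * (n.factorial : ℂ))

/-!
Expand `(1 - θη)^β = ∑ₖ (-β)ₖ (θη)ᵏ / k!` (binomial series, valid as `|θη| < 1`) and
`e^{θ/η} = ∑ₙ θⁿ η⁻ⁿ / n!`. On the circle `|η| = c` the double series of the integrand converges
absolutely, so it can be integrated term by term, and `∮ ηʲ dη = 2πi` for `j = -1` and `0`
otherwise. Only the terms with `n = k + m` survive, and `(m + k)! = m! (m + 1)ₖ` turns what is left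
into `2πi θᵐ Φ(-β, m + 1; θ²) / m!`.
-/

open Metric Real

theorem pochhammer'_neg_div_factorial (β : ℂ) (k : ℕ) :
    pochhammer' (-β) k / k.factorial = (-1) ^ k * Ring.choose β k := by
  rw [Ring.choose_eq_smul, ← Polynomial.aeval_eq_smeval, ← Polynomial.eval_map_algebraMap,
    descPochhammer_map, descPochhammer_eval_eq_prod_range, smul_eq_mul, mul_left_comm,
    ← div_eq_inv_mul, pochhammer', show (-1 : ℂ) ^ k = ∏ _j ∈ Finset.range k, (-1) by simp,
    ← Finset.prod_mul_distrib]
  exact congrArg (· / _) (Finset.prod_congr rfl fun i _ => by ring)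

theorem pochhammer'_natCast_succ_mul_factorial (m k : ℕ) :
    pochhammer' ((m + 1 : ℕ) : ℂ) k * m.factorial = (m + k).factorial := by
  rw [← Nat.factorial_mul_ascFactorial, Nat.ascFactorial_eq_prod_range, pochhammer']
  push_cast
  ring

theorem hasSum_pochhammer'_div_factorial_mul_pow (β : ℂ) {w : ℂ} (hw : ‖w‖ < 1) :
    HasSum (fun k => pochhammer' (-β) k / k.factorial * w ^ k) ((1 - w) ^ β) := by
  have h := (one_add_cpow_hasFPowerSeriesOnBall_zero (a := β)).hasSum (y := -w)
    (by simpa [← ofReal_norm] using ENNReal.ofReal_lt_one.mpr hw)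
  simp only [binomialSeries, FormalMultilinearSeries.ofScalars_apply_eq, smul_eq_mul, zero_sub,
    ← sub_eq_add_neg] at h
  refine h.congr_fun fun k => ?_
  rw [pochhammer'_neg_div_factorial, neg_pow]
  ring

theorem summable_norm_pochhammer'_div_factorial_mul_pow (β : ℂ) {r : ℝ} (hr0 : 0 ≤ r)
    (hr : r < 1) : Summable fun k => ‖pochhammer' (-β) k / k.factorial‖ * r ^ k := by
  lift r to NNReal using hr0
  have h := (binomialSeries ℂ β).summable_norm_mul_pow
    (binomialSeries_radius_ge_one.trans_lt' (by exact_mod_cast hr))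
  simpa [binomialSeries, FormalMultilinearSeries.ofScalars_norm,
    pochhammer'_neg_div_factorial] using h

theorem circleIntegral_sub_center_zpow (c : ℂ) {R : ℝ} (hR : R ≠ 0) (n : ℤ) :
    (∮ z in C(c, R), (z - c) ^ n) = if n = -1 then 2 * π * I else 0 := by
  split_ifs with hn
  · simpa [hn] using circleIntegral.integral_sub_center_inv c hR
  · exact circleIntegral.integral_sub_zpow_of_ne hn c c R

theorem hasSum_circleIntegral_of_hasSum_zpow {ι : Type*} [Countable ι] {f : ℂ → ℂ}
    {a : ι → ℂ} {e : ι → ℤ} {c : ℂ} {R : ℝ} (hR : 0 < R)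
    (hs : Summable fun i => ‖a i‖ * R ^ e i)
    (hf : ∀ z ∈ sphere c R, HasSum (fun i => a i * (z - c) ^ e i) (f z)) :
    HasSum (fun i => if e i = -1 then 2 * π * I * a i else 0) (∮ z in C(c, R), f z) := by
  have hterm : ∀ i, (∮ z in C(c, R), a i * (z - c) ^ e i) =
      if e i = -1 then 2 * π * I * a i else 0 := fun i => by
    rw [circleIntegral.integral_const_mul, circleIntegral_sub_center_zpow c hR.ne']
    split_ifs <;> ring
  simp only [← hterm, circleIntegral]
  refine intervalIntegral.hasSum_integral_of_dominated_convergence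
    (fun i _ => R * (‖a i‖ * R ^ e i)) (fun i => ?_) (fun i => ?_)
    (.of_forall fun _ _ => hs.mul_left R) intervalIntegrable_const
    (.of_forall fun t _ => (hf _ (circleMap_mem_sphere c hR.le t)).const_smul _)
  · refine Continuous.aestronglyMeasurable ?_
    simp only [deriv_circleMap, circleMap_sub_center]
    exact (continuous_circleMap 0 R).mul continuous_const |>.smul
      (continuous_const.mul ((continuous_circleMap 0 R).zpow₀ _
        fun t => .inl (circleMap_ne_center hR.ne')))
  · refine .of_forall fun t _ => le_of_eq ?_
    simp [abs_of_pos hR, circleMap_sub_center, norm_circleMap_zero]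

section Integrand

variable (β θ : ℂ) (m : ℕ)

/-- `laurentCoeff β θ (k, n) * η ^ (k - n)` is the product of the `k`-th term of the binomial
series of `(1 - θη) ^ β` and the `n`-th term of the exponential series of `exp (θ / η)`. -/
noncomputable def laurentCoeff (p : ℕ × ℕ) : ℂ :=
  pochhammer' (-β) p.1 / p.1.factorial * θ ^ p.1 * (θ ^ p.2 / p.2.factorial)

theorem laurentCoeff_mul_zpow {z : ℂ} (hz : z ≠ 0) (p : ℕ × ℕ) :
    laurentCoeff β θ p * z ^ ((p.1 : ℤ) - p.2 + ((m : ℤ) - 1)) =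
      pochhammer' (-β) p.1 / p.1.factorial * (θ * z) ^ p.1 *
        ((θ / z) ^ p.2 / p.2.factorial) * z ^ ((m : ℤ) - 1) := by
  rw [zpow_add₀ hz, zpow_sub₀ hz, zpow_natCast, zpow_natCast, laurentCoeff, mul_pow, div_pow]
  field_simp

variable {β θ m}

theorem summable_norm_binomial_mul_exp_terms {z : ℂ} (hθz : ‖θ * z‖ < 1) :
    Summable fun p : ℕ × ℕ =>
      ‖pochhammer' (-β) p.1 / p.1.factorial * (θ * z) ^ p.1 * ((θ / z) ^ p.2 / p.2.factorial)‖ := by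
  have hbinom : Summable fun k => ‖pochhammer' (-β) k / k.factorial * (θ * z) ^ k‖ := by
    simpa only [norm_mul, norm_pow] using
      summable_norm_pochhammer'_div_factorial_mul_pow β (norm_nonneg _) hθz
  have hexp : Summable fun n => ‖(θ / z) ^ n / (n.factorial : ℂ)‖ :=
    NormedSpace.norm_expSeries_div_summable (θ / z)
  exact (hbinom.mul_of_nonneg hexp (fun _ => norm_nonneg _) fun _ => norm_nonneg _).congr
    fun p => (norm_mul _ _).symm

theorem summable_norm_laurentCoeff_mul_zpow {z : ℂ} (hz : z ≠ 0) (hθz : ‖θ * z‖ < 1) :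
    Summable fun p : ℕ × ℕ => ‖laurentCoeff β θ p * z ^ ((p.1 : ℤ) - p.2 + ((m : ℤ) - 1))‖ := by
  simp_rw [laurentCoeff_mul_zpow β θ m hz, norm_mul _ (z ^ ((m : ℤ) - 1))]
  exact (summable_norm_binomial_mul_exp_terms hθz).mul_right _

theorem hasSum_laurentCoeff_mul_zpow {z : ℂ} (hz : z ≠ 0) (hθz : ‖θ * z‖ < 1) :
    HasSum (fun p : ℕ × ℕ => laurentCoeff β θ p * z ^ ((p.1 : ℤ) - p.2 + ((m : ℤ) - 1)))
      ((1 - θ * z) ^ β * cexp (θ / z) * z ^ ((m : ℤ) - 1)) := by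
  have hexp : HasSum (fun n => (θ / z) ^ n / (n.factorial : ℂ)) (cexp (θ / z)) := by
    rw [exp_eq_exp_ℂ]
    exact NormedSpace.expSeries_div_hasSum_exp (θ / z)
  simp_rw [laurentCoeff_mul_zpow β θ m hz]
  exact ((hasSum_pochhammer'_div_factorial_mul_pow β hθz).mul hexp
    (summable_norm_binomial_mul_exp_terms hθz).of_norm).mul_right _

theorem laurentCoeff_diag (k : ℕ) :
    laurentCoeff β θ (k, k + m) = θ ^ m / m.factorial *
      (pochhammer' (-β) k * (θ ^ 2) ^ k / (pochhammer' ((m + 1 : ℕ) : ℂ) k * k.factorial)) := by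
  have hkm := pochhammer'_natCast_succ_mul_factorial m k
  have hp : pochhammer' ((m + 1 : ℕ) : ℂ) k ≠ 0 :=
    left_ne_zero_of_mul (by rw [hkm]; exact_mod_cast (m + k).factorial_ne_zero)
  rw [laurentCoeff, add_comm k m, ← hkm]
  field_simp
  ring

end Integrand

theorem hasSum_mk_add_right_of_hasSum_ite {M : Type*} [AddCommMonoid M] [TopologicalSpace M]
    {f : ℕ × ℕ → M} {s : M} (m : ℕ)
    (h : HasSum (fun p : ℕ × ℕ => if (p.1 : ℤ) - p.2 + ((m : ℤ) - 1) = -1 then f p else 0) s) :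
    HasSum (fun k => f (k, k + m)) s := by
  have hinj : Function.Injective fun k : ℕ => (k, k + m) := fun _ _ h => (Prod.ext_iff.mp h).1
  refine ((hinj.hasSum_iff fun p hp => if_neg fun he => hp ⟨p.1, ?_⟩).mpr h).congr_fun
    fun k => (if_pos (by push_cast; ring)).symm
  exact Prod.ext rfl (by dsimp only; omega)

theorem confluent_contour_integral'_general
    (θ : ℂ) (β : ℂ) (m : ℕ) (c : ℝ)
    (hc0 : 0 < c) (hc : c < 1 / ‖θ‖) :
    (2 * Real.pi * Complex.I)⁻¹ *
        (∮ η in C(0, c),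
          (1 - θ * η) ^ β * Complex.exp (θ / η) * η ^ ((m : ℤ) - 1)) =
      θ ^ m * confluentHyp (-β) (m + 1) (θ ^ 2) / (m.factorial : ℂ) := by
  have hθc : ‖θ‖ * c < 1 := (lt_div_iff₀' (one_div_pos.mp (hc0.trans hc))).mp (by simpa using hc)
  have hsphere : ∀ z ∈ sphere (0 : ℂ) c, z ≠ 0 ∧ ‖θ * z‖ < 1 := fun z hz => by
    rw [mem_sphere_zero_iff_norm] at hz
    exact ⟨ne_zero_of_norm_ne_zero (hz ▸ hc0.ne'), by rwa [norm_mul, hz]⟩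
  have hc_mem : (c : ℂ) ∈ sphere (0 : ℂ) c := by simp [abs_of_pos hc0]
  have hsummable : Summable fun p : ℕ × ℕ =>
      ‖laurentCoeff β θ p‖ * c ^ ((p.1 : ℤ) - p.2 + ((m : ℤ) - 1)) := by
    simpa [abs_of_pos hc0] using
      summable_norm_laurentCoeff_mul_zpow (m := m) (hsphere c hc_mem).1 (hsphere c hc_mem).2
  have hres := hasSum_circleIntegral_of_hasSum_zpow (c := 0)
    (f := fun η => (1 - θ * η) ^ β * cexp (θ / η) * η ^ ((m : ℤ) - 1)) hc0 hsummable
    fun z hz => by simpa using hasSum_laurentCoeff_mul_zpow (hsphere z hz).1 (hsphere z hz).2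
  have hdiag := hasSum_mk_add_right_of_hasSum_ite m hres
  rw [← hdiag.tsum_eq, confluentHyp]
  simp_rw [laurentCoeff_diag, tsum_mul_left]
  field_simp

theorem confluent_contour_integral'
    (θ : ℂ) (hθ : θ ≠ 0) (β : ℂ) (m : ℕ) (c : ℝ)
    (hc0 : 0 < c) (hc : c < 1 / ‖θ‖) :
    (2 * Real.pi * Complex.I)⁻¹ *
        (∮ η in C(0, c),
          (1 - θ * η) ^ β * Complex.exp (θ / η) * η ^ ((m : ℤ) - 1)) =
      θ ^ m * confluentHyp (-β) (m + 1) (θ ^ 2) / (m.factorial : ℂ) :=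
  confluent_contour_integral'_general θ β m c hc0 hc
end

section
/- For every ξ ∈ ℂ with 0 < |ξ| < 1, all α, α' ∈ ℂ, every integer m ≥ 0, and every c with |ξ| < c < 1/|ξ|, one has (2πi)^{-1} ∮_{|ζ|=c} (1 − ξζ)^{−α} (1 − ξ/ζ)^{α'} ζ^{−m−1} dζ = ((α)_m / m!) · ξ^m · F(α+m, −α'; m+1; ξ²). -/
open Complex

/-- The Gauss hypergeometric function `F(a, b; c; x)` with positive integer
parameter `c`. -/
noncomputable def gaussHyp (a b : ℂ) (c : ℕ) (x : ℂ) : ℂ :=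
  ∑' n : ℕ, pochhammer' a n * pochhammer' b n * x ^ n /
    (pochhammer' (c : ℂ) n * (n.factorial : ℂ))

/-!
Both factors are binomial series, `(1 - w) ^ (-s) = ∑ (s)ₙ wⁿ / n!` for `‖w‖ < 1`, and on the
circle `‖ζ‖ = c` they are evaluated at `ξζ` and `ξ/ζ`, both of modulus `< 1`. Their product is
therefore an absolutely convergent Laurent series
`∑ⱼ ∑ₖ (α)ⱼ (-α')ₖ / (j! k!) · ξ^(j+k) ζ^(j-k)`, which can be integrated term by term against
`ζ^(-m-1)`. Only the terms with total exponent `-1`, i.e. the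
diagonal `j = k + m`, survive, and `(α)_(k+m) / (k+m)! = (α)_m / m! · (α+m)_k / (m+1)_k`
turns the diagonal sum into the hypergeometric series.
-/

open Real
open scoped Nat

theorem pochhammer'_eq_ascPochhammer_eval (a : ℂ) (n : ℕ) :
    pochhammer' a n = (ascPochhammer ℂ n).eval a := by
  induction n with
  | zero => simp [pochhammer']
  | succ n ih =>
    rw [pochhammer', Finset.prod_range_succ, ← pochhammer', ih, ascPochhammer_succ_eval]

theorem pochhammer'_add (a : ℂ) (m k : ℕ) :
    pochhammer' a (m + k) = pochhammer' a m * pochhammer' (a + m) k := by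
  simp only [pochhammer', Finset.prod_range_add, Nat.cast_add, add_assoc]

theorem factorial_add_eq_mul_pochhammer' (m k : ℕ) :
    ((m + k)! : ℂ) = m ! * pochhammer' ((m + 1 : ℕ) : ℂ) k := by
  rw [← Finset.prod_range_add_one_eq_factorial, Finset.prod_range_add, pochhammer']
  push_cast [Finset.prod_range_add_one_eq_factorial]
  congr 1
  exact Finset.prod_congr rfl fun _ _ ↦ by ring

theorem ringChoose_add_sub_one_eq_pochhammer'_div_factorial (s : ℂ) (n : ℕ) :
    Ring.choose (s + n - 1) n = pochhammer' s n / n ! := by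
  rw [← Ring.multichoose_eq, eq_div_iff (Nat.cast_ne_zero.mpr n.factorial_ne_zero), mul_comm,
    ← nsmul_eq_mul, Ring.factorial_nsmul_multichoose_eq_ascPochhammer,
    Polynomial.ascPochhammer_smeval_eq_eval, pochhammer'_eq_ascPochhammer_eval]

theorem hasFPowerSeriesOnBall_one_sub_cpow_neg (s : ℂ) :
    HasFPowerSeriesOnBall (fun w ↦ (1 - w) ^ (-s))
      (.ofScalars ℂ fun n ↦ pochhammer' s n / n !) 0 1 := by
  simpa [ringChoose_add_sub_one_eq_pochhammer'_div_factorial, cpow_neg] using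
    one_div_one_sub_cpow_hasFPowerSeriesOnBall_zero s

theorem summable_mul_zpow_of_norm_eq {ι : Type*} {a : ι → ℂ} {e : ι → ℤ} {R : ℝ}
    (hs : Summable fun i ↦ ‖a i‖ * R ^ e i) {w : ℂ} (hw : ‖w‖ = R) :
    Summable fun i ↦ a i * w ^ e i :=
  .of_norm <| hs.congr fun i ↦ by rw [norm_mul, norm_zpow, hw]

theorem circleIntegral_const_mul_sub_zpow (a z : ℂ) {R : ℝ} (hR : 0 < R) (n : ℤ) :
    (∮ ζ in C(z, R), a * (ζ - z) ^ n) = if n = -1 then 2 * π * I * a else 0 := by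
  rw [circleIntegral.integral_const_mul]
  split_ifs with hn
  · simp only [hn, zpow_neg_one,
      circleIntegral.integral_sub_inv_of_mem_ball (Metric.mem_ball_self hR)]
    ring
  · rw [circleIntegral.integral_sub_zpow_of_ne hn, mul_zero]

theorem hasSum_circleIntegral_tsum_mul_zpow {ι : Type*} [Countable ι] {a : ι → ℂ} {e : ι → ℤ}
    (z : ℂ) {R : ℝ} (hR : 0 < R) (hs : Summable fun i ↦ ‖a i‖ * R ^ e i) :
    HasSum (fun i ↦ if e i = -1 then 2 * π * I * a i else 0)
      (∮ ζ in C(z, R), ∑' i, a i * (ζ - z) ^ e i) := by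
  simp only [← circleIntegral_const_mul_sub_zpow _ z hR, circleIntegral]
  have hnorm : ∀ θ, ‖circleMap z R θ - z‖ = R := fun θ ↦ by
    rw [circleMap_sub_center, norm_circleMap_zero, abs_of_pos hR]
  refine intervalIntegral.hasSum_integral_of_dominated_convergence
    (fun i _ ↦ R * (‖a i‖ * R ^ e i)) (fun i ↦ ?_) (fun i ↦ ?_) ?_ intervalIntegrable_const ?_
  · refine Continuous.aestronglyMeasurable ?_
    simp only [deriv_circleMap, circleMap_sub_center]
    exact (continuous_circleMap 0 R).mul continuous_const |>.smul <| continuous_const.mul <|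
      (continuous_circleMap 0 R).zpow₀ _ fun θ ↦ .inl (circleMap_ne_center hR.ne')
  · refine .of_forall fun θ _ ↦ le_of_eq ?_
    rw [norm_smul, norm_mul, norm_zpow, hnorm, deriv_circleMap, norm_mul, norm_circleMap_zero,
      norm_I, mul_one, abs_of_pos hR]
  · exact .of_forall fun θ _ ↦ hs.mul_left R
  · exact .of_forall fun θ _ ↦ (summable_mul_zpow_of_norm_eq hs (hnorm θ)).hasSum.const_smul _

section PowerSeriesProduct

variable {f g : ℂ → ℂ} {A B : ℕ → ℂ} {r r₁ r₂ : ENNReal}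

theorem HasFPowerSeriesOnBall.hasSum_ofScalars (hf : HasFPowerSeriesOnBall f (.ofScalars ℂ A) 0 r)
    {w : ℂ} (hw : ‖w‖ₑ < r) : HasSum (fun n ↦ A n * w ^ n) (f w) := by
  simpa [FormalMultilinearSeries.ofScalars_apply_eq, mul_comm] using
    hf.hasSum (y := w) (by simpa using hw)

theorem HasFPowerSeriesOnBall.summable_norm_ofScalars_mul_pow
    (hf : HasFPowerSeriesOnBall f (.ofScalars ℂ A) 0 r) {w : ℂ} (hw : ‖w‖ₑ < r) :
    Summable fun n ↦ ‖A n * w ^ n‖ := by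
  simpa [FormalMultilinearSeries.ofScalars_norm] using
    FormalMultilinearSeries.summable_norm_mul_pow _ (r := ‖w‖₊) (hw.trans_le hf.r_le)

theorem hasSum_comp_mul_mul_comp_div_mul_zpow (hf : HasFPowerSeriesOnBall f (.ofScalars ℂ A) 0 r₁)
    (hg : HasFPowerSeriesOnBall g (.ofScalars ℂ B) 0 r₂) {ξ ζ : ℂ} (hζ : ζ ≠ 0)
    (h₁ : ‖ξ * ζ‖ₑ < r₁) (h₂ : ‖ξ / ζ‖ₑ < r₂) (m : ℕ) :
    Summable (fun p : ℕ × ℕ ↦ ‖A p.1 * B p.2 * ξ ^ (p.1 + p.2) * ζ ^ ((p.1 : ℤ) - p.2 - m - 1)‖) ∧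
      HasSum (fun p : ℕ × ℕ ↦ A p.1 * B p.2 * ξ ^ (p.1 + p.2) * ζ ^ ((p.1 : ℤ) - p.2 - m - 1))
        (f (ξ * ζ) * g (ξ / ζ) * ζ ^ (-(m : ℤ) - 1)) := by
  have hterm : ∀ p : ℕ × ℕ, A p.1 * (ξ * ζ) ^ p.1 * (B p.2 * (ξ / ζ) ^ p.2) * ζ ^ (-(m : ℤ) - 1) =
      A p.1 * B p.2 * ξ ^ (p.1 + p.2) * ζ ^ ((p.1 : ℤ) - p.2 - m - 1) := by
    intro p
    simp only [sub_eq_add_neg, zpow_add₀ hζ, zpow_natCast, zpow_neg, mul_pow, div_pow, pow_add]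
    field_simp
  have hprod := (hf.summable_norm_ofScalars_mul_pow h₁).mul_norm
    (hg.summable_norm_ofScalars_mul_pow h₂)
  refine ⟨(hprod.mul_right ‖ζ ^ (-(m : ℤ) - 1)‖).congr fun p ↦ by
    rw [← hterm p]; exact (norm_mul _ _).symm, ?_⟩
  have h := ((hf.hasSum_ofScalars h₁).mul (hg.hasSum_ofScalars h₂) hprod.of_norm).mul_right
    (ζ ^ (-(m : ℤ) - 1))
  simpa only [hterm] using h

theorem hasSum_circleIntegral_comp_mul_mul_comp_div_mul_zpow
    (hf : HasFPowerSeriesOnBall f (.ofScalars ℂ A) 0 r₁)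
    (hg : HasFPowerSeriesOnBall g (.ofScalars ℂ B) 0 r₂) {ξ : ℂ} {c : ℝ} (hc : 0 < c)
    (hξc : ENNReal.ofReal (‖ξ‖ * c) < r₁) (hξc' : ENNReal.ofReal (‖ξ‖ / c) < r₂) (m : ℕ) :
    HasSum (fun k ↦ A (k + m) * B k * ξ ^ (2 * k + m))
      ((2 * π * I)⁻¹ * ∮ ζ in C(0, c), f (ξ * ζ) * g (ξ / ζ) * ζ ^ (-(m : ℤ) - 1)) := by
  have hlaurent (ζ : ℂ) (hζ : ‖ζ‖ = c) := hasSum_comp_mul_mul_comp_div_mul_zpow hf hg (ξ := ξ)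
    (norm_pos_iff.mp (hζ ▸ hc)) (by rwa [← ofReal_norm, norm_mul, hζ])
    (by rwa [← ofReal_norm, norm_div, hζ]) m
  have hs : Summable fun p : ℕ × ℕ ↦
      ‖A p.1 * B p.2 * ξ ^ (p.1 + p.2)‖ * c ^ ((p.1 : ℤ) - p.2 - m - 1) :=
    (hlaurent c (by simp [hc.le])).1.congr fun p ↦ by
      rw [norm_mul, norm_zpow, norm_real, Real.norm_of_nonneg hc.le]
  have hL := hasSum_circleIntegral_tsum_mul_zpow 0 hc hs
  rw [circleIntegral.integral_congr hc.le fun ζ hζ ↦ by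
    simpa using (hlaurent ζ (by simpa using hζ)).2.tsum_eq] at hL
  have hdiag : Function.Injective fun k : ℕ ↦ (k + m, k) := fun k l h ↦ (Prod.ext_iff.mp h).2
  rw [← hdiag.hasSum_iff] at hL
  · have h2πI : (2 * π * I : ℂ) ≠ 0 := by simp [pi_ne_zero]
    refine (hL.mul_left (2 * π * I)⁻¹).congr_fun fun k ↦ ?_
    simp only [Function.comp_apply]
    rw [if_pos (by push_cast; ring), inv_mul_cancel_left₀ h2πI]
    ring
  · rintro ⟨j, k⟩ hjk
    exact if_neg fun h ↦ hjk ⟨k, Prod.ext (show k + m = j by omega) rfl⟩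

end PowerSeriesProduct

theorem pochhammer'_mul_eq_gaussHyp_term (α β ξ : ℂ) (m k : ℕ) :
    pochhammer' α (k + m) / (k + m)! * (pochhammer' β k / k !) * ξ ^ (2 * k + m) =
      pochhammer' α m / m ! * ξ ^ m *
        (pochhammer' (α + m) k * pochhammer' β k * (ξ ^ 2) ^ k /
          (pochhammer' ((m + 1 : ℕ) : ℂ) k * k !)) := by
  have hfac : ((m + k)! : ℂ) ≠ 0 := Nat.cast_ne_zero.mpr (Nat.factorial_ne_zero _)
  rw [factorial_add_eq_mul_pochhammer'] at hfac
  rw [add_comm k m, pochhammer'_add, factorial_add_eq_mul_pochhammer']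
  field_simp
  ring

theorem gauss_contour_integral_general
    (ξ : ℂ) (α α' : ℂ) (m : ℕ) (c : ℝ)
    (hc1 : ‖ξ‖ < c) (hc2 : c < 1 / ‖ξ‖) :
    (2 * Real.pi * Complex.I)⁻¹ *
        (∮ ζ in C(0, c),
          (1 - ξ * ζ) ^ (-α) * (1 - ξ / ζ) ^ α' * ζ ^ (-(m : ℤ) - 1)) =
      pochhammer' α m / (m.factorial : ℂ) * ξ ^ m *
        gaussHyp (α + m) (-α') (m + 1) (ξ ^ 2) := by
  -- `1 / 0 = 0`, so `hc2` excludes `ξ = 0`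
  have hξ : 0 < ‖ξ‖ := (norm_nonneg ξ).lt_of_ne fun h ↦ by
    rw [← h, div_zero] at hc2
    linarith [norm_nonneg ξ]
  have hc : 0 < c := hξ.trans hc1
  have hseries := hasSum_circleIntegral_comp_mul_mul_comp_div_mul_zpow
    (hasFPowerSeriesOnBall_one_sub_cpow_neg α)
    (by simpa using hasFPowerSeriesOnBall_one_sub_cpow_neg (-α')) hc
    (ENNReal.ofReal_lt_one.mpr ((lt_div_iff₀' hξ).mp hc2))
    (ENNReal.ofReal_lt_one.mpr ((div_lt_one hc).mpr hc1)) m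
  rw [← hseries.tsum_eq, gaussHyp, ← tsum_mul_left]
  exact tsum_congr fun k ↦ pochhammer'_mul_eq_gaussHyp_term α (-α') ξ m k

theorem gauss_contour_integral
    (ξ : ℂ) (hξ0 : ξ ≠ 0) (hξ1 : ‖ξ‖ < 1) (α α' : ℂ) (m : ℕ) (c : ℝ)
    (hc1 : ‖ξ‖ < c) (hc2 : c < 1 / ‖ξ‖) :
    (2 * Real.pi * Complex.I)⁻¹ *
        (∮ ζ in C(0, c),
          (1 - ξ * ζ) ^ (-α) * (1 - ξ / ζ) ^ α' * ζ ^ (-(m : ℤ) - 1)) =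
      pochhammer' α m / (m.factorial : ℂ) * ξ ^ m *
        gaussHyp (α + m) (-α') (m + 1) (ξ ^ 2) :=
  gauss_contour_integral_general ξ α α' m c hc1 hc2
end
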